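/- arXiv:1211.4191 — 2 statements merged into one kernel-verified Lean document; each statement's English description precedes it below -/
import Mathlib

section
/- Let n > 6 be an even integer and m a positive integer. Let f₁, f₂, f₃ : 𝔽₂ⁿ → 𝔽₂ be bent functions such that ν₁ = f₁ ⊕ f₂ ⊕ f₃ is bent and the dual of ν₁ equals f̃₁ ⊕ f̃₂ ⊕ f̃₃. Let g₁, g₂, g₃ : 𝔽₂^m → 𝔽₂ be arbitrary Boolean functions, set ν₂ = g₁ ⊕ g₂ ⊕ g₃, and define f(x,y) = f₁(x) ⊕ g₁(y) ⊕ (f₁(x)⊕f₂(x))(g₁(y)⊕g₂(y)) ⊕ (f₂(x)⊕f₃(x))(g₂(y)⊕g₃(y)). Then for every α ∈ 𝔽₂ⁿ and β ∈ 𝔽₂^m: (1) if W_{f₁}(α) = W_{f₂}(α) = W_{f₃}(α), then W_{ν₁}(α) = W_{f₁}(α) and W_f(α,β) = W_{g₁}(β)·W_{f₁}(α); (2) if W_{f₁}(α) = W_{f₂}(α) ≠ W_{f₃}(α), then W_{ν₁}(α) = W_{f₃}(α) and W_f(α,β) = W_{ν₂}(β)·W_{f₁}(α); (3) if W_{f₁}(α)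 ≠ W_{f₂}(α) = W_{f₃}(α), then W_{ν₁}(α) = W_{f₁}(α) and W_f(α,β) = W_{g₂}(β)·W_{f₁}(α); (4) if W_{f₁}(α) = W_{f₃}(α) ≠ W_{f₂}(α), then W_{ν₁}(α) = W_{f₂}(α) and W_f(α,β) = W_{g₃}(β)·W_{f₁}(α). -/
open Finset

/-- The sign `(-1)^b` for `b ∈ 𝔽₂`. -/
def chi (b : ZMod 2) : ℤ := if b = 0 then 1 else -1

/-- The Walsh transform of a Boolean function in `n` variables. -/
def walsh {n : ℕ} (f : (Fin n → ZMod 2) → ZMod 2) (ω : Fin n → ZMod 2) : ℤ :=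
  ∑ x : Fin n → ZMod 2, chi (f x + ∑ i, ω i * x i)

/-- The Walsh transform of a Boolean function given on a product `𝔽₂ⁿ × 𝔽₂^m`. -/
def walsh2 {n m : ℕ} (f : (Fin n → ZMod 2) → (Fin m → ZMod 2) → ZMod 2)
    (α : Fin n → ZMod 2) (β : Fin m → ZMod 2) : ℤ :=
  ∑ x : Fin n → ZMod 2, ∑ y : Fin m → ZMod 2,
    chi (f x y + (∑ i, α i * x i) + (∑ j, β j * y j))

/-- A Boolean function in `n` variables is bent if its Walsh transform only
takes the values `±2^(n/2)`. -/
def IsBent (n : ℕ) (f : (Fin n → ZMod 2) → ZMod 2) : Prop :=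
  ∀ a, walsh f a = 2 ^ (n / 2) ∨ walsh f a = -(2 ^ (n / 2))

/-- Bentness for a function given on a product, i.e. as a function in `n + m` variables. -/
def IsBent2 (n m : ℕ) (f : (Fin n → ZMod 2) → (Fin m → ZMod 2) → ZMod 2) : Prop :=
  ∀ α β, walsh2 f α β = 2 ^ ((n + m) / 2) ∨ walsh2 f α β = -(2 ^ ((n + m) / 2))

/-- `fd` is the dual of a bent function `f`:  `W_f(ω) = 2^(n/2) (−1)^{fd(ω)}`. -/
def IsDual {n : ℕ} (f fd : (Fin n → ZMod 2) → ZMod 2) : Prop :=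
  ∀ ω, walsh f ω = 2 ^ (n / 2) * chi (fd ω)

/-- The dual for a bent function given on a product (a function of `n + m` variables). -/
def IsDual2 {n m : ℕ} (f fd : (Fin n → ZMod 2) → (Fin m → ZMod 2) → ZMod 2) : Prop :=
  ∀ α β, walsh2 f α β = 2 ^ ((n + m) / 2) * chi (fd α β)

/-- Insert the bit `b` at position `μ`, giving a vector of length `n` from one of length `n-1`. -/
def insertAt {n : ℕ} (μ : Fin n) (b : ZMod 2) (x : Fin (n - 1) → ZMod 2) : Fin n → ZMod 2 :=
  fun i =>
    if h : (i : ℕ) < (μ : ℕ) then x ⟨i, by have := μ.isLt; omega⟩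
    else if h' : (μ : ℕ) < (i : ℕ) then x ⟨(i : ℕ) - 1, by have := i.isLt; omega⟩
    else b

/-- Hamming weight of a vector in `𝔽₂ⁿ`. -/
def wt {n : ℕ} (ω : Fin n → ZMod 2) : ℕ := (Finset.univ.filter fun i => ω i ≠ 0).card

/-- `t`-resiliency (with `t : ℤ`, so that the convention that every function is
`(-1)`-resilient holds). -/
def Resilient {n : ℕ} (t : ℤ) (f : (Fin n → ZMod 2) → ZMod 2) : Prop :=
  ∀ ω, (wt ω : ℤ) ≤ t → walsh f ω = 0

/-- `t`-resiliency for a function given on a product `𝔽₂ⁿ × 𝔽₂^m`. -/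
def Resilient2 {n m : ℕ} (t : ℤ) (f : (Fin n → ZMod 2) → (Fin m → ZMod 2) → ZMod 2) : Prop :=
  ∀ α β, (wt α + wt β : ℤ) ≤ t → walsh2 f α β = 0


lemma pointwise_gis (a b c u v w L M : ZMod 2) :
    (4:ℤ) * chi (a + u + (a + b) * (u + v) + (b + c) * (v + w) + L + M) =
      chi (u + M) * (chi (a + L) + chi (b + L) + chi (c + L) + chi (a + b + c + L))
    + chi (v + M) * (chi (a + L) - chi (b + L) - chi (c + L) + chi (a + b + c + L))
    + chi (w + M) * (chi (a + L) - chi (b + L) + chi (c + L) - chi (a + b + c + L))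
    + chi (u + v + w + M) * (chi (a + L) + chi (b + L) - chi (c + L) - chi (a + b + c + L)) := by
  revert a b c u v w L M; decide

lemma chi3_gis (a b c : ZMod 2) : chi (a + b + c) = chi a * chi b * chi c := by
  revert a b c; decide

lemma fubini_four_gis {ι κ : Type*} [Fintype ι] [Fintype κ] (t1 t2 t3 t4 : κ → ℤ)
    (e1 e2 e3 e4 : ι → ℤ) :
    ∑ x : ι, ∑ y : κ, (t1 y * e1 x + t2 y * e2 x + t3 y * e3 x + t4 y * e4 x)
    = (∑ y, t1 y) * (∑ x, e1 x) + (∑ y, t2 y) * (∑ x, e2 x)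
      + (∑ y, t3 y) * (∑ x, e3 x) + (∑ y, t4 y) * (∑ x, e4 x) := by
  simp only [Finset.sum_add_distrib, ← Finset.sum_mul, ← Finset.mul_sum]

lemma key_gis {n m : ℕ} (f1 f2 f3 ν1 : (Fin n → ZMod 2) → ZMod 2)
    (hν1 : ∀ x, ν1 x = f1 x + f2 x + f3 x)
    (g1 g2 g3 ν2 : (Fin m → ZMod 2) → ZMod 2)
    (hν2 : ∀ y, ν2 y = g1 y + g2 y + g3 y)
    (f : (Fin n → ZMod 2) → (Fin m → ZMod 2) → ZMod 2)
    (hf : ∀ x y,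
      f x y = f1 x + g1 y + (f1 x + f2 x) * (g1 y + g2 y) + (f2 x + f3 x) * (g2 y + g3 y))
    (α : Fin n → ZMod 2) (β : Fin m → ZMod 2) :
    4 * walsh2 f α β =
      walsh g1 β * (walsh f1 α + walsh f2 α + walsh f3 α + walsh ν1 α)
    + walsh g2 β * (walsh f1 α - walsh f2 α - walsh f3 α + walsh ν1 α)
    + walsh g3 β * (walsh f1 α - walsh f2 α + walsh f3 α - walsh ν1 α)
    + walsh ν2 β * (walsh f1 α + walsh f2 α - walsh f3 α - walsh ν1 α) := by
  have step1 : 4 * walsh2 f α β =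
      ∑ x : Fin n → ZMod 2, ∑ y : Fin m → ZMod 2,
        (chi (g1 y + ∑ j, β j * y j) *
            (chi (f1 x + ∑ i, α i * x i) + chi (f2 x + ∑ i, α i * x i)
              + chi (f3 x + ∑ i, α i * x i) + chi (ν1 x + ∑ i, α i * x i))
         + chi (g2 y + ∑ j, β j * y j) *
            (chi (f1 x + ∑ i, α i * x i) - chi (f2 x + ∑ i, α i * x i)
              - chi (f3 x + ∑ i, α i * x i) + chi (ν1 x + ∑ i, α i * x i))
         + chi (g3 y + ∑ j, β j * y j) *
            (chi (f1 x + ∑ i, α i * x i) - chi (f2 x + ∑ i, α i * x i)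
              + chi (f3 x + ∑ i, α i * x i) - chi (ν1 x + ∑ i, α i * x i))
         + chi (ν2 y + ∑ j, β j * y j) *
            (chi (f1 x + ∑ i, α i * x i) + chi (f2 x + ∑ i, α i * x i)
              - chi (f3 x + ∑ i, α i * x i) - chi (ν1 x + ∑ i, α i * x i))) := by
    unfold walsh2
    rw [Finset.mul_sum]
    refine Finset.sum_congr rfl fun x _ => ?_
    rw [Finset.mul_sum]
    refine Finset.sum_congr rfl fun y _ => ?_
    rw [hf, hν1, hν2]
    exact pointwise_gis (f1 x) (f2 x) (f3 x) (g1 y) (g2 y) (g3 y) _ _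
  rw [step1, fubini_four_gis]
  unfold walsh
  simp only [Finset.sum_add_distrib, Finset.sum_sub_distrib]

/-- the four cases for the Walsh transform of the generalized indirect sum
when `f₁, f₂, f₃` are bent, `ν₁ = f₁ ⊕ f₂ ⊕ f₃` is bent and its dual is the sum of
the duals. -/
theorem walsh_cases_generalized_indirect_sum (n m : ℕ) (hn6 : 6 < n) (hn : Even n)
    (hm : 1 ≤ m)
    (f1 f2 f3 ν1 : (Fin n → ZMod 2) → ZMod 2)
    (hν1 : ∀ x, ν1 x = f1 x + f2 x + f3 x)
    (hf1 : IsBent n f1) (hf2 : IsBent n f2) (hf3 : IsBent n f3) (hbν : IsBent n ν1)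
    (d1 d2 d3 dν : (Fin n → ZMod 2) → ZMod 2)
    (hd1 : IsDual f1 d1) (hd2 : IsDual f2 d2) (hd3 : IsDual f3 d3) (hdν : IsDual ν1 dν)
    (hdual : ∀ x, dν x = d1 x + d2 x + d3 x)
    (g1 g2 g3 ν2 : (Fin m → ZMod 2) → ZMod 2)
    (hν2 : ∀ y, ν2 y = g1 y + g2 y + g3 y)
    (f : (Fin n → ZMod 2) → (Fin m → ZMod 2) → ZMod 2)
    (hf : ∀ x y,
      f x y = f1 x + g1 y + (f1 x + f2 x) * (g1 y + g2 y) + (f2 x + f3 x) * (g2 y + g3 y)) :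
    ∀ (α : Fin n → ZMod 2) (β : Fin m → ZMod 2),
      ((walsh f1 α = walsh f2 α ∧ walsh f2 α = walsh f3 α) →
        walsh ν1 α = walsh f1 α ∧ walsh2 f α β = walsh g1 β * walsh f1 α) ∧
      ((walsh f1 α = walsh f2 α ∧ walsh f1 α ≠ walsh f3 α) →
        walsh ν1 α = walsh f3 α ∧ walsh2 f α β = walsh ν2 β * walsh f1 α) ∧
      ((walsh f1 α ≠ walsh f2 α ∧ walsh f2 α = walsh f3 α) →
        walsh ν1 α = walsh f1 α ∧ walsh2 f α β = walsh g2 β * walsh f1 α) ∧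
      ((walsh f1 α = walsh f3 α ∧ walsh f1 α ≠ walsh f2 α) →
        walsh ν1 α = walsh f2 α ∧ walsh2 f α β = walsh g3 β * walsh f1 α) := by
  intro α β
  have hKK0 : ((2:ℤ) ^ (n / 2)) * (2:ℤ) ^ (n / 2) ≠ 0 := by positivity
  have hWν : ((2:ℤ) ^ (n / 2)) * (2:ℤ) ^ (n / 2) * walsh ν1 α =
      walsh f1 α * walsh f2 α * walsh f3 α := by
    rw [hd1 α, hd2 α, hd3 α, hdν α, hdual α, chi3_gis]; ring
  have hsq : walsh f1 α * walsh f1 α = ((2:ℤ) ^ (n / 2)) * (2:ℤ) ^ (n / 2) := by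
    rcases hf1 α with h | h <;> rw [h] <;> ring
  have hkey := key_gis f1 f2 f3 ν1 hν1 g1 g2 g3 ν2 hν2 f hf α β
  refine ⟨fun ⟨h12, h23⟩ => ?_, fun ⟨h12, h13⟩ => ?_, fun ⟨h12, h23⟩ => ?_,
    fun ⟨h13, h12⟩ => ?_⟩
  · -- W1 = W2 = W3
    have hc : walsh f3 α = walsh f1 α := (h12.trans h23).symm
    have hν : walsh ν1 α = walsh f1 α := by
      refine mul_left_cancel₀ hKK0 ?_
      rw [hWν, ← h12, hc, hsq]
    refine ⟨hν, mul_left_cancel₀ (by norm_num : (4:ℤ) ≠ 0) ?_⟩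
    rw [hkey, ← h12, hc, hν]; ring
  · -- W1 = W2 ≠ W3
    have hc : walsh f3 α = -walsh f1 α := by
      rcases hf1 α with h1 | h1 <;> rcases hf3 α with h3 | h3
      · exact absurd (h1.trans h3.symm) h13
      · rw [h3, h1]; try ring
      · rw [h3, h1]; try ring
      · exact absurd (h1.trans h3.symm) h13
    have hν : walsh ν1 α = -walsh f1 α := by
      refine mul_left_cancel₀ hKK0 ?_
      rw [hWν, ← h12, hc]
      rw [show walsh f1 α * walsh f1 α * -walsh f1 α =
        (walsh f1 α * walsh f1 α) * -walsh f1 α from rfl, hsq]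
    refine ⟨by rw [hc, hν], mul_left_cancel₀ (by norm_num : (4:ℤ) ≠ 0) ?_⟩
    rw [hkey, ← h12, hc, hν]; ring
  · -- W1 ≠ W2 = W3
    have hb : walsh f2 α = -walsh f1 α := by
      rcases hf1 α with h1 | h1 <;> rcases hf2 α with h2 | h2
      · exact absurd (h1.trans h2.symm) h12
      · rw [h2, h1]; try ring
      · rw [h2, h1]; try ring
      · exact absurd (h1.trans h2.symm) h12
    have hc : walsh f3 α = -walsh f1 α := h23 ▸ hb
    have hν : walsh ν1 α = walsh f1 α := by
      refine mul_left_cancel₀ hKK0 ?_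
      rw [hWν, hb, hc, show walsh f1 α * -walsh f1 α * -walsh f1 α =
        (walsh f1 α * walsh f1 α) * walsh f1 α by ring, hsq]
    refine ⟨hν, mul_left_cancel₀ (by norm_num : (4:ℤ) ≠ 0) ?_⟩
    rw [hkey, hb, hc, hν]; ring
  · -- W1 = W3 ≠ W2
    have hb : walsh f2 α = -walsh f1 α := by
      rcases hf1 α with h1 | h1 <;> rcases hf2 α with h2 | h2
      · exact absurd (h1.trans h2.symm) h12
      · rw [h2, h1]; try ring
      · rw [h2, h1]; try ring
      · exact absurd (h1.trans h2.symm) h12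
    have hν : walsh ν1 α = -walsh f1 α := by
      refine mul_left_cancel₀ hKK0 ?_
      rw [hWν, hb, ← h13, show walsh f1 α * -walsh f1 α * walsh f1 α =
        (walsh f1 α * walsh f1 α) * -walsh f1 α by ring, hsq]
    refine ⟨by rw [hb, hν], mul_left_cancel₀ (by norm_num : (4:ℤ) ≠ 0) ?_⟩
    rw [hkey, hb, ← h13, hν]; ring
end

section
/- Let n > 6 be an even integer and m a positive integer. Let f₁, f₂, f₃ : 𝔽₂ⁿ → 𝔽₂ be bent functions such that ν₁ = f₁ ⊕ f₂ ⊕ f₃ is bent and the dual of ν₁ equals f̃₁ ⊕ f̃₂ ⊕ f̃₃. Let r be an even integer with 0 ≤ r ≤ m, and suppose g₁, g₂, g₃ : 𝔽₂^m → 𝔽₂ and ν₂ = g₁ ⊕ g₂ ⊕ g₃ are all r-th order plateaued functions in m variables. Then f(x,y) = f₁(x) ⊕ g₁(y) ⊕ (f₁(x)⊕f₂(x))(g₁(y)⊕g₂(y)) ⊕ (f₂(x)⊕f₃(x))(g₂(y)⊕g₃(y)) is an (n+r)-th order plateaued function in n+m variables. -/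
open Finset

/-- `r`-th order plateaued function in `m` variables: the Walsh transform is nonzero at
exactly `2^r` points and its square takes only the values `0` and `2^{2m-r}`. -/
def Plateaued (m r : ℕ) (g : (Fin m → ZMod 2) → ZMod 2) : Prop :=
  ((Finset.univ.filter fun ω => walsh g ω ≠ 0).card = 2 ^ r) ∧
  ∀ ω, (walsh g ω) ^ 2 = 0 ∨ (walsh g ω) ^ 2 = 2 ^ (2 * m - r)

/-- `r`-th order plateaued function on a product, viewed as a function
in `n + m` variables. -/
def Plateaued2 (n m r : ℕ) (f : (Fin n → ZMod 2) → (Fin m → ZMod 2) → ZMod 2) : Prop :=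
  ((Finset.univ.filter fun p : (Fin n → ZMod 2) × (Fin m → ZMod 2) =>
      walsh2 f p.1 p.2 ≠ 0).card = 2 ^ r) ∧
  ∀ α β, (walsh2 f α β) ^ 2 = 0 ∨ (walsh2 f α β) ^ 2 = 2 ^ (2 * (n + m) - r)


lemma chi_add : ∀ a b : ZMod 2, chi (a + b) = chi a * chi b := by decide
lemma chi_ne_zero : ∀ a : ZMod 2, chi a ≠ 0 := by decide
lemma chi_sq : ∀ a : ZMod 2, chi a ^ 2 = 1 := by decide
lemma zmod2_cases : ∀ c : ZMod 2, c = 0 ∨ c = 1 := by decide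
lemma z2a : ∀ u v w : ZMod 2, u + 1*(u+v) + 0*(v+w) = v := by decide
lemma z2b : ∀ u v w : ZMod 2, u + 1*(u+v) + 1*(v+w) = w := by decide

lemma walshF {n : ℕ} (f1 f2 f3 ν1 : (Fin n → ZMod 2) → ZMod 2)
    (hν1 : ∀ x, ν1 x = f1 x + f2 x + f3 x)
    (d1 d2 d3 dν : (Fin n → ZMod 2) → ZMod 2)
    (hd1 : IsDual f1 d1) (hd2 : IsDual f2 d2) (hd3 : IsDual f3 d3) (hdν : IsDual ν1 dν)
    (hdual : ∀ x, dν x = d1 x + d2 x + d3 x)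
    (α : Fin n → ZMod 2) (a b : ZMod 2) :
    walsh (fun x => f1 x + a*(f1 x + f2 x) + b*(f2 x + f3 x)) α
      = 2 ^ (n / 2) * chi (d1 α + a*(d1 α + d2 α) + b*(d2 α + d3 α)) := by
  rcases zmod2_cases a with ha | ha <;> rcases zmod2_cases b with hb | hb <;>
    subst ha <;> subst hb
  · have h : (fun x => f1 x + 0*(f1 x + f2 x) + 0*(f2 x + f3 x)) = f1 := by
      funext x; ring
    rw [h, hd1]; congr 1; congr 1; ring
  · have h : (fun x => f1 x + 0*(f1 x + f2 x) + 1*(f2 x + f3 x)) = ν1 := by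
      funext x; rw [hν1]; ring
    rw [h, hdν]; congr 1; congr 1; rw [hdual]; ring
  · have h : (fun x => f1 x + 1*(f1 x + f2 x) + 0*(f2 x + f3 x)) = f2 := by
      funext x; exact z2a _ _ _
    rw [h, hd2]; congr 1; congr 1; exact (z2a _ _ _).symm
  · have h : (fun x => f1 x + 1*(f1 x + f2 x) + 1*(f2 x + f3 x)) = f3 := by
      funext x; exact z2b _ _ _
    rw [h, hd3]; congr 1; congr 1; exact (z2b _ _ _).symm

lemma walsh2_formula {n m : ℕ}
    (f1 f2 f3 ν1 : (Fin n → ZMod 2) → ZMod 2)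
    (hν1 : ∀ x, ν1 x = f1 x + f2 x + f3 x)
    (d1 d2 d3 dν : (Fin n → ZMod 2) → ZMod 2)
    (hd1 : IsDual f1 d1) (hd2 : IsDual f2 d2) (hd3 : IsDual f3 d3) (hdν : IsDual ν1 dν)
    (hdual : ∀ x, dν x = d1 x + d2 x + d3 x)
    (g1 g2 g3 : (Fin m → ZMod 2) → ZMod 2)
    (f : (Fin n → ZMod 2) → (Fin m → ZMod 2) → ZMod 2)
    (hf : ∀ x y,
      f x y = f1 x + g1 y + (f1 x + f2 x) * (g1 y + g2 y) + (f2 x + f3 x) * (g2 y + g3 y))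
    (α : Fin n → ZMod 2) (β : Fin m → ZMod 2) :
    walsh2 f α β = 2 ^ (n / 2) * chi (d1 α) *
      walsh (fun y => g1 y + (d1 α + d2 α)*(g1 y + g2 y) + (d2 α + d3 α)*(g2 y + g3 y)) β := by
  unfold walsh2 walsh
  rw [Finset.sum_comm, Finset.mul_sum]
  refine Finset.sum_congr rfl fun y _ => ?_
  have h1 : ∀ x : Fin n → ZMod 2, f x y + (∑ i, α i * x i) + (∑ j, β j * y j)
      = ((f1 x + (g1 y + g2 y)*(f1 x + f2 x) + (g2 y + g3 y)*(f2 x + f3 x))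
          + ∑ i, α i * x i) + (g1 y + ∑ j, β j * y j) := by
    intro x; rw [hf]; ring
  calc (∑ x : Fin n → ZMod 2, chi (f x y + (∑ i, α i * x i) + (∑ j, β j * y j)))
      = ∑ x : Fin n → ZMod 2,
          chi ((f1 x + (g1 y + g2 y)*(f1 x + f2 x) + (g2 y + g3 y)*(f2 x + f3 x))
            + ∑ i, α i * x i) * chi (g1 y + ∑ j, β j * y j) := by
        refine Finset.sum_congr rfl fun x _ => ?_
        rw [h1 x, chi_add]
    _ = walsh (fun x => f1 x + (g1 y + g2 y)*(f1 x + f2 x) + (g2 y + g3 y)*(f2 x + f3 x)) α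
          * chi (g1 y + ∑ j, β j * y j) := by
        rw [← Finset.sum_mul]; rfl
    _ = 2 ^ (n / 2) * chi (d1 α + (g1 y + g2 y)*(d1 α + d2 α) + (g2 y + g3 y)*(d2 α + d3 α))
          * chi (g1 y + ∑ j, β j * y j) := by
        rw [walshF f1 f2 f3 ν1 hν1 d1 d2 d3 dν hd1 hd2 hd3 hdν hdual]
    _ = 2 ^ (n / 2) * chi (d1 α) *
          chi ((g1 y + (d1 α + d2 α)*(g1 y + g2 y) + (d2 α + d3 α)*(g2 y + g3 y))
            + ∑ j, β j * y j) := by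
        rw [mul_assoc, mul_assoc, ← chi_add, ← chi_add]
        congr 2
        ring

lemma gsel_plateaued {m r : ℕ} (g1 g2 g3 ν2 : (Fin m → ZMod 2) → ZMod 2)
    (hν2 : ∀ y, ν2 y = g1 y + g2 y + g3 y)
    (hg1 : Plateaued m r g1) (hg2 : Plateaued m r g2) (hg3 : Plateaued m r g3)
    (hgν : Plateaued m r ν2) (c1 c2 : ZMod 2) :
    Plateaued m r (fun y => g1 y + c1*(g1 y + g2 y) + c2*(g2 y + g3 y)) := by
  rcases zmod2_cases c1 with h1 | h1 <;> rcases zmod2_cases c2 with h2 | h2 <;>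
    subst h1 <;> subst h2
  · have h : (fun y => g1 y + 0*(g1 y + g2 y) + 0*(g2 y + g3 y)) = g1 := by
      funext y; ring
    rw [h]; exact hg1
  · have h : (fun y => g1 y + 0*(g1 y + g2 y) + 1*(g2 y + g3 y)) = ν2 := by
      funext y; rw [hν2]; ring
    rw [h]; exact hgν
  · have h : (fun y => g1 y + 1*(g1 y + g2 y) + 0*(g2 y + g3 y)) = g2 := by
      funext y; exact z2a _ _ _
    rw [h]; exact hg2
  · have h : (fun y => g1 y + 1*(g1 y + g2 y) + 1*(g2 y + g3 y)) = g3 := by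
      funext y; exact z2b _ _ _
    rw [h]; exact hg3


/-- if `g₁, g₂, g₃` and `ν₂` are `r`-th order plateaued, the generalized
indirect sum with bent `f₁, f₂, f₃` (whose triple sum `ν₁` is bent with dual the sum of
the duals) is `(n+r)`-th order plateaued in `n + m` variables. -/
theorem plateaued_generalized_indirect_sum (n m : ℕ) (hn6 : 6 < n) (hn : Even n)
    (hm : 1 ≤ m)
    (f1 f2 f3 ν1 : (Fin n → ZMod 2) → ZMod 2)
    (hν1 : ∀ x, ν1 x = f1 x + f2 x + f3 x)
    (hf1 : IsBent n f1) (hf2 : IsBent n f2) (hf3 : IsBent n f3) (hbν : IsBent n ν1)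
    (d1 d2 d3 dν : (Fin n → ZMod 2) → ZMod 2)
    (hd1 : IsDual f1 d1) (hd2 : IsDual f2 d2) (hd3 : IsDual f3 d3) (hdν : IsDual ν1 dν)
    (hdual : ∀ x, dν x = d1 x + d2 x + d3 x)
    (r : ℕ) (hr : Even r) (hrm : r ≤ m)
    (g1 g2 g3 ν2 : (Fin m → ZMod 2) → ZMod 2)
    (hν2 : ∀ y, ν2 y = g1 y + g2 y + g3 y)
    (hg1 : Plateaued m r g1) (hg2 : Plateaued m r g2) (hg3 : Plateaued m r g3)
    (hgν : Plateaued m r ν2)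
    (f : (Fin n → ZMod 2) → (Fin m → ZMod 2) → ZMod 2)
    (hf : ∀ x y,
      f x y = f1 x + g1 y + (f1 x + f2 x) * (g1 y + g2 y) + (f2 x + f3 x) * (g2 y + g3 y)) :
    Plateaued2 n m (n + r) f := by
  classical
  set G : (Fin n → ZMod 2) → (Fin m → ZMod 2) → ZMod 2 := fun α =>
    (fun y => g1 y + (d1 α + d2 α)*(g1 y + g2 y) + (d2 α + d3 α)*(g2 y + g3 y)) with hG
  have hform : ∀ α β, walsh2 f α β = 2 ^ (n / 2) * chi (d1 α) * walsh (G α) β :=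
    fun α β => walsh2_formula f1 f2 f3 ν1 hν1 d1 d2 d3 dν hd1 hd2 hd3 hdν hdual
      g1 g2 g3 f hf α β
  have hGpl : ∀ α, Plateaued m r (G α) := fun α =>
    gsel_plateaued g1 g2 g3 ν2 hν2 hg1 hg2 hg3 hgν _ _
  have h2n : (2:ℤ) ^ (n/2) ≠ 0 := pow_ne_zero _ (by norm_num)
  have hne : ∀ α β, walsh2 f α β ≠ 0 ↔ walsh (G α) β ≠ 0 := by
    intro α β
    rw [hform]
    constructor
    · intro h hw; exact h (by rw [hw, mul_zero])
    · intro h hw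
      rcases mul_eq_zero.mp hw with h' | h'
      · rcases mul_eq_zero.mp h' with h'' | h''
        · exact h2n h''
        · exact chi_ne_zero _ h''
      · exact h h'
  constructor
  · have key : (Finset.univ.filter fun p : (Fin n → ZMod 2) × (Fin m → ZMod 2) =>
        walsh2 f p.1 p.2 ≠ 0).card
        = ∑ α : Fin n → ZMod 2,
            (Finset.univ.filter fun β => walsh (G α) β ≠ 0).card := by
      rw [← Fintype.card_subtype]
      rw [Fintype.card_congr
        (Equiv.subtypeProdEquivSigmaSubtype fun α β => walsh2 f α β ≠ 0)]
      rw [Fintype.card_sigma]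
      refine Finset.sum_congr rfl fun α _ => ?_
      rw [Fintype.card_subtype]
      congr 1
      apply Finset.filter_congr
      intro β _
      simp only [hne α β]
    rw [key]
    have : ∀ α : Fin n → ZMod 2,
        (Finset.univ.filter fun β => walsh (G α) β ≠ 0).card = 2 ^ r :=
      fun α => (hGpl α).1
    rw [Finset.sum_congr rfl fun α _ => this α, Finset.sum_const,
      Finset.card_univ, smul_eq_mul]
    have hcard : Fintype.card (Fin n → ZMod 2) = 2 ^ n := by
      simp [Fintype.card_fun]
    rw [hcard, ← pow_add]
  · intro α β
    rw [hform]
    have hsq : (2 ^ (n / 2) * chi (d1 α) * walsh (G α) β) ^ 2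
        = 2 ^ n * (walsh (G α) β) ^ 2 := by
      have hd2 : n / 2 * 2 = n := Nat.div_mul_cancel hn.two_dvd
      rw [mul_pow, mul_pow, chi_sq, mul_one, ← pow_mul, hd2]
    rw [hsq]
    rcases (hGpl α).2 β with h | h
    · left; rw [h, mul_zero]
    · right
      rw [h, ← pow_add]
      congr 1
      omega
end
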